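/- arXiv:2110.07652 — 4 statements merged into one kernel-verified Lean document; each statement's English description precedes it below -/
import Mathlib

section
/- Let P and Q be probability measures on a common measurable space with P ≪ Q, and suppose the Radon–Nikodym derivative r = dP/dQ has an atomless (continuous) distribution under Q. Let V ∼ P and W ∼ Q be independent random elements. Then (1/4)·E_Q|r(W) − 1| ≤ 1/2 − P(r(V) < r(W)) ≤ (1/2)·E_Q|r(W) − 1|. -/
/-!
Since `P.prod Q` has density `r x` with respect to `Q.prod Q`, the probability
`p = P(r V < r W)` equals `∫_{r x < r y} r x d(Q ⊗ Q)`. Writing `|u - v| = u + v - 2 min u v`,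
swapping the coordinates and using that the diagonal `{r x = r y}` is `Q ⊗ Q`-null (this is
where atomlessness enters), one finds `p = 1/2 - G/4`, where `G = E|r W - r W'|` is the Gini
mean difference of `r` under `Q`. Since `E r = 1`, Jensen's inequality and the triangle inequality
give `E|r - 1| ≤ G ≤ 2 E|r - 1|`.
-/

open MeasureTheory ProbabilityTheory

section
variable {α β : Type*} [MeasurableSpace α] [MeasurableSpace β]

theorem measureReal_prod_eq_setIntegral_rnDeriv {P Q : Measure α} [SigmaFinite P]
    [P.HaveLebesgueDecomposition Q] (hac : P ≪ Q)
    (ν : Measure β) [SFinite ν] {s : Set (α × β)} (hs : MeasurableSet s) :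
    (P.prod ν).real s = ∫ z in s, (P.rnDeriv Q z.1).toReal ∂(Q.prod ν) := by
  have hfin : ∀ᵐ z ∂(Q.prod ν), P.rnDeriv Q z.1 < ⊤ :=
    Measure.quasiMeasurePreserving_fst.ae (Measure.rnDeriv_lt_top P Q)
  conv_lhs => rw [← Measure.withDensity_rnDeriv_eq P Q hac]
  rw [prod_withDensity_left (Measure.measurable_rnDeriv P Q), measureReal_def,
    withDensity_apply _ hs, integral_toReal (by fun_prop) (ae_restrict_of_ae hfin)]

theorem measure_prod_setOf_eq_eq_zero {f : α → ℝ} (hf : Measurable f) (μ : Measure α)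
    {ν : Measure α} [SFinite ν] (hatom : ∀ t, ν {x | f x = t} = 0) :
    (μ.prod ν) {z | f z.1 = f z.2} = 0 := by
  rw [Measure.prod_apply (measurableSet_eq_fun (by fun_prop) (by fun_prop))]
  have hsection : ∀ x, Prod.mk x ⁻¹' {z : α × α | f z.1 = f z.2} = {y | f y = f x} :=
    fun x => Set.ext fun _ => eq_comm
  simp_rw [hsection, hatom, lintegral_zero]
end

noncomputable def giniMeanDiff {α : Type*} [MeasurableSpace α] (μ : Measure α) (f : α → ℝ) : ℝ :=
  ∫ z, |f z.1 - f z.2| ∂(μ.prod μ)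

section
variable {α : Type*} [MeasurableSpace α] {μ : Measure α} [IsProbabilityMeasure μ] {f : α → ℝ}

theorem integral_abs_sub_integral_le_giniMeanDiff (hf : Integrable f μ) :
    ∫ x, |f x - ∫ y, f y ∂μ| ∂μ ≤ giniMeanDiff μ f := by
  have hint : Integrable (fun z : α × α => |f z.1 - f z.2|) (μ.prod μ) :=
    ((hf.comp_fst μ).sub (hf.comp_snd μ)).abs
  have hjensen : ∀ x, |f x - ∫ y, f y ∂μ| ≤ ∫ y, |f x - f y| ∂μ := fun x => by
    calc |f x - ∫ y, f y ∂μ| = |∫ y, (f x - f y) ∂μ| := by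
          rw [integral_sub (integrable_const _) hf, integral_const, probReal_univ, one_smul]
      _ ≤ ∫ y, |f x - f y| ∂μ := abs_integral_le_integral_abs
  calc ∫ x, |f x - ∫ y, f y ∂μ| ∂μ ≤ ∫ x, ∫ y, |f x - f y| ∂μ ∂μ :=
        integral_mono (hf.sub (integrable_const _)).abs hint.integral_prod_left hjensen
    _ = giniMeanDiff μ f := integral_integral (f := fun x y => |f x - f y|) hint

theorem giniMeanDiff_le_two_mul_integral_abs_sub (hf : Integrable f μ) (c : ℝ) :
    giniMeanDiff μ f ≤ 2 * ∫ x, |f x - c| ∂μ := by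
  have hdev : Integrable (fun x => |f x - c|) μ := (hf.sub (integrable_const c)).abs
  calc giniMeanDiff μ f ≤ ∫ z : α × α, (|f z.1 - c| + |f z.2 - c|) ∂(μ.prod μ) :=
        integral_mono ((hf.comp_fst μ).sub (hf.comp_snd μ)).abs
          ((hdev.comp_fst μ).add (hdev.comp_snd μ)) fun z =>
            (abs_sub_le _ c _).trans_eq (by rw [abs_sub_comm c])
    _ = 2 * ∫ x, |f x - c| ∂μ := by
        rw [integral_add (hdev.comp_fst μ) (hdev.comp_snd μ),
          integral_fun_fst (fun x => |f x - c|), integral_fun_snd (fun x => |f x - c|)]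
        simp [two_mul]

theorem setIntegral_fst_lt_snd_eq (hf : Integrable f μ) (hfm : Measurable f)
    (hdiag : (μ.prod μ) {z | f z.1 = f z.2} = 0) :
    ∫ z in {z : α × α | f z.1 < f z.2}, f z.1 ∂(μ.prod μ)
      = (∫ x, f x ∂μ) / 2 - giniMeanDiff μ f / 4 := by
  set A := {z : α × α | f z.1 < f z.2}
  have hA : MeasurableSet A := measurableSet_lt (by fun_prop) (by fun_prop)
  have hA' : MeasurableSet {z : α × α | f z.1 ≤ f z.2} :=
    measurableSet_le (by fun_prop) (by fun_prop)
  have hfst := hf.comp_fst μ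
  have hsnd := hf.comp_snd μ
  have hmin : ∫ z, min (f z.1) (f z.2) ∂(μ.prod μ)
      = ∫ z in A, f z.1 ∂(μ.prod μ) + ∫ z in Aᶜ, f z.2 ∂(μ.prod μ) := by
    rw [← integral_indicator hA, ← integral_indicator hA.compl,
      ← integral_add (hfst.indicator hA) (hsnd.indicator hA.compl)]
    congr 1 with z
    by_cases hz : f z.1 < f z.2
    · simp [A, hz, hz.le]
    · simp [A, hz, le_of_not_gt hz]
  -- the diagonal is null, so `≤` and `<` cut out the same half of `μ.prod μ`
  have hle_ae : {z : α × α | f z.1 ≤ f z.2} =ᵐ[μ.prod μ] A := by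
    refine ae_eq_set.2 ⟨measure_mono_null (fun z hz => le_antisymm hz.1 (not_lt.1 hz.2)) hdiag, ?_⟩
    have hsub : A ⊆ {z : α × α | f z.1 ≤ f z.2} :=
      fun z (hz : f z.1 < f z.2) => show f z.1 ≤ f z.2 from hz.le
    rw [Set.sdiff_eq_empty.2 hsub, measure_empty]
  have hswap : ∫ z in Aᶜ, f z.2 ∂(μ.prod μ) = ∫ z in A, f z.1 ∂(μ.prod μ) := by
    calc ∫ z in Aᶜ, f z.2 ∂(μ.prod μ)
          = ∫ z in {z : α × α | f z.1 ≤ f z.2}, f z.1 ∂(μ.prod μ) := by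
          rw [← integral_indicator hA.compl, ← integral_indicator hA', ← integral_prod_swap]
          congr 1 with z
          simp [A, Set.indicator, not_lt]
      _ = ∫ z in A, f z.1 ∂(μ.prod μ) := setIntegral_congr_set hle_ae
  have habs : giniMeanDiff μ f
      = ∫ z, (f z.1 + f z.2 - 2 * min (f z.1) (f z.2)) ∂(μ.prod μ) := by
    refine integral_congr_ae (ae_of_all _ fun z => ?_)
    rcases le_total (f z.1) (f z.2) with h | h
    · simp [h, abs_of_nonpos (sub_nonpos.2 h)]; ring
    · simp [h, abs_of_nonneg (sub_nonneg.2 h)]; ring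
  have hsum : Integrable (fun z : α × α => f z.1 + f z.2) (μ.prod μ) := hfst.add hsnd
  have hmin_int : Integrable (fun z : α × α => 2 * min (f z.1) (f z.2)) (μ.prod μ) :=
    (hfst.inf hsnd).const_mul 2
  rw [integral_sub hsum hmin_int, integral_add hfst hsnd,
    integral_const_mul, integral_fun_fst f, integral_fun_snd f, hmin, hswap] at habs
  simp only [probReal_univ, one_smul] at habs
  linarith
end

/-- For probability measures `P ≪ Q` with Radon–Nikodym derivative `r`
whose distribution under `Q` is atomless, and independent `V ∼ P`, `W ∼ Q`,
`(1/4)·E_Q|r − 1| ≤ 1/2 − P(r(V) < r(W)) ≤ (1/2)·E_Q|r − 1|`. -/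
theorem stmt_0 {α : Type*} [MeasurableSpace α]
    (P Q : Measure α) [IsProbabilityMeasure P] [IsProbabilityMeasure Q]
    (hac : P ≪ Q)
    (r : α → ℝ) (hr : r = fun x => (P.rnDeriv Q x).toReal)
    (hcont : ∀ t : ℝ, Q {x | r x = t} = 0) :
    (1 / 4) * (∫ x, |r x - 1| ∂Q)
        ≤ 1 / 2 - ((P.prod Q) {p : α × α | r p.1 < r p.2}).toReal
      ∧ 1 / 2 - ((P.prod Q) {p : α × α | r p.1 < r p.2}).toReal
        ≤ (1 / 2) * (∫ x, |r x - 1| ∂Q) := by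
  have hrm : Measurable r := hr ▸ (Measure.measurable_rnDeriv P Q).ennreal_toReal
  have hint : Integrable r Q := hr ▸ Measure.integrable_toReal_rnDeriv
  have hmean : ∫ x, r x ∂Q = 1 := by
    rw [hr, Measure.integral_toReal_rnDeriv hac, probReal_univ]
  have hprob : (P.prod Q).real {p : α × α | r p.1 < r p.2} = 1 / 2 - giniMeanDiff Q r / 4 := by
    have hdensity : (fun z : α × α => (P.rnDeriv Q z.1).toReal) = fun z => r z.1 := by rw [hr]
    rw [measureReal_prod_eq_setIntegral_rnDeriv hac Q
        (measurableSet_lt (by fun_prop) (by fun_prop)), hdensity,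
      setIntegral_fst_lt_snd_eq hint hrm (measure_prod_setOf_eq_eq_zero hrm Q hcont), hmean]
  have hlower := integral_abs_sub_integral_le_giniMeanDiff hint
  have hupper := giniMeanDiff_le_two_mul_integral_abs_sub hint 1
  rw [hmean] at hlower
  rw [← measureReal_def, hprob]
  constructor <;> linarith
end

section
/- Let P and Q be probability measures on a common measurable space with P ≪ Q, r = dP/dQ, and suppose r(W) has an atomless distribution for W ∼ Q. If W and W' are independent and identically distributed with law Q, then 1/2 − E[r(W')·1{r(W') < r(W)}] = (1/4)·E|r(W) − r(W')|. -/
/-!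
Write `X = r(W)`, `X' = r(W')`. Since `|X - X'| = X + X' - 2 min(X, X')` and `E X = E X' = 1`, it
suffices to show `E min(X, X') = 2 E[X' 1{X' < X}]`. Split `min(X, X')` into `X' 1{X' < X}` and
`X 1{X ≤ X'}`; exchanging `W` and `W'` turns the second into `X' 1{X' ≤ X}`, which agrees with the
first almost surely because the atomless law of `X` makes the diagonal `{X = X'}` null.
-/

open MeasureTheory

lemma abs_sub_eq_add_sub_two_mul_min (a b : ℝ) : |a - b| = a + b - 2 * min a b := by
  rcases le_total a b with h | h
  · rw [abs_of_nonpos (by linarith), min_eq_left h]; ring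
  · rw [abs_of_nonneg (by linarith), min_eq_right h]; ring

lemma min_eq_ite_lt_add_ite_le (a b : ℝ) :
    min a b = (if b < a then b else 0) + (if a ≤ b then a else 0) := by
  rcases lt_or_ge b a with h | h
  · rw [if_pos h, if_neg (not_le.mpr h), min_eq_right h.le, add_zero]
  · rw [if_neg (not_lt.mpr h), if_pos h, min_eq_left h, zero_add]

section

variable {α : Type*} [MeasurableSpace α] {μ : Measure α} {f : α → ℝ}

theorem ae_prod_ne_of_measure_eq_zero [SFinite μ] (hf : Measurable f)
    (hf_atomless : ∀ t, μ {x | f x = t} = 0) : ∀ᵐ q ∂μ.prod μ, f q.1 ≠ f q.2 := by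
  have hdiag : MeasurableSet {q : α × α | f q.1 = f q.2} :=
    measurableSet_eq_fun (hf.comp measurable_fst) (hf.comp measurable_snd)
  have hslice : ∀ x, μ {y | f x = f y} = 0 := fun x => by
    simpa only [eq_comm] using hf_atomless (f x)
  rw [ae_iff]
  simp only [ne_eq, not_not]
  rw [Measure.prod_apply hdiag]
  simp [hslice]

theorem integral_prod_min_eq_two_mul_integral_ite_lt [IsFiniteMeasure μ] (hf : Measurable f)
    (hint : Integrable f μ) (hf_atomless : ∀ t, μ {x | f x = t} = 0) :
    ∫ q, min (f q.1) (f q.2) ∂μ.prod μ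
      = 2 * ∫ q, (if f q.2 < f q.1 then f q.2 else 0) ∂μ.prod μ := by
  have hlt : Integrable (fun q : α × α => if f q.2 < f q.1 then f q.2 else 0) (μ.prod μ) :=
    ((hint.comp_snd μ).indicator (measurableSet_lt (hf.comp measurable_snd)
      (hf.comp measurable_fst))).congr (.of_forall fun q => by simp [Set.indicator_apply])
  have hle : Integrable (fun q : α × α => if f q.1 ≤ f q.2 then f q.1 else 0) (μ.prod μ) :=
    ((hint.comp_fst μ).indicator (measurableSet_le (hf.comp measurable_fst)
      (hf.comp measurable_snd))).congr (.of_forall fun q => by simp [Set.indicator_apply])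
  have hswap : ∫ q, (if f q.1 ≤ f q.2 then f q.1 else 0) ∂μ.prod μ
      = ∫ q, (if f q.2 ≤ f q.1 then f q.2 else 0) ∂μ.prod μ :=
    integral_prod_swap (fun q : α × α => if f q.2 ≤ f q.1 then f q.2 else 0)
  have hae : ∫ q, (if f q.2 ≤ f q.1 then f q.2 else 0) ∂μ.prod μ
      = ∫ q, (if f q.2 < f q.1 then f q.2 else 0) ∂μ.prod μ := by
    refine integral_congr_ae ?_
    filter_upwards [ae_prod_ne_of_measure_eq_zero hf hf_atomless] with q hq
    simp only [le_iff_lt_or_eq, hq.symm, or_false]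
  simp only [min_eq_ite_lt_add_ite_le]
  rw [integral_add hlt hle, hswap, hae]
  ring

theorem integral_prod_abs_sub [IsProbabilityMeasure μ] (hint : Integrable f μ) :
    ∫ q, |f q.1 - f q.2| ∂μ.prod μ
      = 2 * ∫ x, f x ∂μ - 2 * ∫ q, min (f q.1) (f q.2) ∂μ.prod μ := by
  have hfst := hint.comp_fst μ
  have hsnd := hint.comp_snd μ
  have hsum : Integrable (fun q : α × α => f q.1 + f q.2) (μ.prod μ) := hfst.add hsnd
  have hmin : Integrable (fun q : α × α => min (f q.1) (f q.2)) (μ.prod μ) := hfst.inf hsnd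
  simp only [abs_sub_eq_add_sub_two_mul_min]
  rw [integral_sub hsum (hmin.const_mul 2), integral_add hfst hsnd,
    integral_const_mul, integral_fun_fst, integral_fun_snd]
  simp only [probReal_univ, one_smul]
  ring

end

/-- For `P ≪ Q` with Radon–Nikodym derivative `r` atomless under `Q`,
and `W, W'` i.i.d. with law `Q` (here `W = q.1`, `W' = q.2` on `Q.prod Q`):
`1/2 − E[r(W')·1{r(W') < r(W)}] = (1/4)·E|r(W) − r(W')|`. -/
theorem stmt_1 {α : Type*} [MeasurableSpace α]
    (P Q : Measure α) [IsProbabilityMeasure P] [IsProbabilityMeasure Q]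
    (hac : P ≪ Q)
    (r : α → ℝ) (hr : r = fun x => (P.rnDeriv Q x).toReal)
    (hcont : ∀ t : ℝ, Q {x | r x = t} = 0) :
    1 / 2 - (∫ q, (if r q.2 < r q.1 then r q.2 else 0) ∂(Q.prod Q))
      = (1 / 4) * ∫ q, |r q.1 - r q.2| ∂(Q.prod Q) := by
  have hrm : Measurable r := hr ▸ (Measure.measurable_rnDeriv P Q).ennreal_toReal
  have hint : Integrable r Q := hr ▸ Measure.integrable_toReal_rnDeriv
  have hmean : ∫ x, r x ∂Q = 1 := by
    rw [hr, Measure.integral_toReal_rnDeriv hac, probReal_univ]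
  rw [integral_prod_abs_sub hint, hmean,
    integral_prod_min_eq_two_mul_integral_ite_lt hrm hint hcont]
  ring
end

section
/- Let (X_1,Y_1), …, (X_n,Y_n) (n ≥ 3) be i.i.d. with law P_{XY}, and let (X_i',Y_i') be the cyclic permutation of the sample. Let θ̂: 𝒳×𝒴 → [0,1] be a fixed measurable function such that θ̂(X,Y) has an atomless distribution under both P_{XY} and P_X×P_Y. Define R = n^{-2} Σ_{i,j=1}^n 1{θ̂(X_i,Y_i) < θ̂(X_j',Y_j')} and the projection R_μ = n^{-1} Σ_{i=1}^n [1 − F₂(θ̂(X_i,Y_i)) − μ*] + n^{-1} Σ_{i=1}^n [F₁(θ̂(X_i',Y_i')) − μ*]. Then there is a universal constant C such that E[(R − μ* − R_μ)²] ≤ C·n^{-2}. -/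
/-!
Writing `Zᵢ = (Xᵢ, Yᵢ)` and `Zⱼ' = (Xⱼ, Yⱼ₊₁)`, the remainder `R − μ* − R_μ` equals
`n⁻² ∑ᵢ ∑ⱼ K(Zᵢ, Zⱼ')` for the kernel `K = rankKernel`, which is degenerate: it integrates to
zero in its first argument under `P_{XY}` (this is where `θ̂` must be atomless under `P_{XY}`) and
in its second argument under `P_X × P_Y`, the law of every `Zⱼ'`.
Expanding the square, `E[K(Zᵢ, Zⱼ') K(Zₖ, Zₗ')]` vanishes as soon as one of the blocks of
coordinates `{i}`, `{j, j+1}`, `{k}`, `{l, l+1}` is disjoint from the other three: that block is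
independent of the rest and integrates `K` to zero. The surviving quadruples have
`i, k ∈ {j, j+1, l, l+1}`, or `i = k` with `{j, j+1} ∩ {l, l+1} ≠ ∅`; there are at most `19 n²`
of them, and each term is at most `‖K‖∞² ≤ 4`.
-/

open MeasureTheory ProbabilityTheory

/-- The cyclic successor of an index. -/
def cycIdx {n : ℕ} (i : Fin n) : Fin n := ⟨(i.val + 1) % n, Nat.mod_lt _ i.pos⟩

/-- The cyclicly permuted sample: `(Xᵢ', Yᵢ') = (Xᵢ, Y_{i+1})` (indices mod `n`). -/
def cyc {X Y : Type*} {n : ℕ} (Z : Fin n → X × Y) (i : Fin n) : X × Y :=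
  ((Z i).1, (Z (cycIdx i)).2)

/-- Cumulative distribution function of `θ` under the measure `m`. -/
noncomputable def cdfOf {X Y : Type*} [MeasurableSpace X] [MeasurableSpace Y]
    (m : Measure (X × Y)) (θ : X × Y → ℝ) (t : ℝ) : ℝ := (m {z | θ z ≤ t}).toReal

/-- The rank-sum statistic `R = n⁻² Σ_{i,j} 1{θ(Xᵢ,Yᵢ) < θ(Xⱼ',Yⱼ')}`. -/
noncomputable def Rstat {X Y : Type*} {n : ℕ} (θ : X × Y → ℝ) (Z : Fin n → X × Y) : ℝ :=
  ((n : ℝ) ^ 2)⁻¹ * ∑ i : Fin n, ∑ j : Fin n, if θ (Z i) < θ (cyc Z j) then (1 : ℝ) else 0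

/-- The Hoeffding projection
`R_μ = n⁻¹ Σᵢ (1 − F₂(θ(Xᵢ,Yᵢ)) − μ*) + n⁻¹ Σᵢ (F₁(θ(Xᵢ',Yᵢ')) − μ*)`. -/
noncomputable def Rproj {X Y : Type*} {n : ℕ} (θ : X × Y → ℝ) (F₁ F₂ : ℝ → ℝ) (μs : ℝ)
    (Z : Fin n → X × Y) : ℝ :=
  (n : ℝ)⁻¹ * (∑ i : Fin n, (1 - F₂ (θ (Z i)) - μs))
    + (n : ℝ)⁻¹ * ∑ i : Fin n, (F₁ (θ (cyc Z i)) - μs)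

open Finset

theorem ProbabilityTheory.IndepFun.integral_comp_eq_zero {Ω α β : Type*} [MeasurableSpace Ω]
    [MeasurableSpace α] [MeasurableSpace β] {P : Measure Ω} [IsProbabilityMeasure P]
    {U : Ω → α} {V : Ω → β} (hUV : IndepFun U V P) (hU : Measurable U) (hV : Measurable V)
    {Φ : α → β → ℝ} (hΦ : Integrable (Function.uncurry Φ) ((P.map U).prod (P.map V)))
    (h : ∀ b, ∫ a, Φ a b ∂(P.map U) = 0) :
    ∫ ω, Φ (U ω) (V ω) ∂P = 0 := by
  have hmap := (indepFun_iff_map_prod_eq_prod_map_map hU.aemeasurable hV.aemeasurable).1 hUV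
  calc ∫ ω, Φ (U ω) (V ω) ∂P = ∫ x, Function.uncurry Φ x ∂(P.map fun ω ↦ (U ω, V ω)) :=
        (integral_map (hU.prodMk hV).aemeasurable (hmap ▸ hΦ.aestronglyMeasurable)).symm
    _ = ∫ b, ∫ a, Φ a b ∂(P.map U) ∂(P.map V) := by rw [hmap]; exact integral_prod_symm _ hΦ
    _ = 0 := by simp [h]

theorem indepFun_pi_of_disjoint {ι E α β : Type*} [Fintype ι] [MeasurableSpace E]
    [MeasurableSpace α] [MeasurableSpace β] (μ : Measure E) [IsProbabilityMeasure μ]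
    {s t : Finset ι} (hst : Disjoint s t) {f : (s → E) → α} {g : (t → E) → β}
    (hf : Measurable f) (hg : Measurable g) :
    IndepFun (fun ω : ι → E ↦ f fun a ↦ ω a) (fun ω ↦ g fun b ↦ ω b) (Measure.pi fun _ ↦ μ) :=
  ((iIndepFun_pi (X := fun _ ↦ id) fun _ ↦ aemeasurable_id).indepFun_finset s t hst
    fun _ ↦ measurable_pi_apply _).comp hf hg

theorem abs_mul_le_sq_of_abs_le {α β : Type*} {K : α → β → ℝ} {c : ℝ}
    (hc : ∀ z w, |K z w| ≤ c) (z z' : α) (w w' : β) : |K z w * K z' w'| ≤ c ^ 2 := by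
  rw [abs_mul, sq]
  exact mul_le_mul (hc z w) (hc z' w') (abs_nonneg _) ((abs_nonneg _).trans (hc z w))

section CyclicSample

variable {X Y : Type*} [MeasurableSpace X] [MeasurableSpace Y] {n : ℕ}

theorem cycIdx_eq_finRotate (i : Fin n) : cycIdx i = finRotate n i := by
  rcases n with _ | n
  · exact i.elim0
  · ext; simp [cycIdx, Fin.val_add]

theorem cycIdx_injective : Function.Injective (cycIdx (n := n)) := by
  simpa only [funext cycIdx_eq_finRotate] using (finRotate n).injective

theorem cycIdx_ne_self (hn : 2 ≤ n) (i : Fin n) : cycIdx i ≠ i := by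
  intro h
  have := congrArg Fin.val h
  simp only [cycIdx] at this
  rcases Nat.lt_or_ge (i.val + 1) n with hlt | hge
  · rw [Nat.mod_eq_of_lt hlt] at this; omega
  · rw [show i.val + 1 = n by omega, Nat.mod_self] at this; omega

theorem measurable_cyc (j : Fin n) : Measurable fun ω : Fin n → X × Y ↦ cyc ω j := by
  unfold cyc; fun_prop

theorem map_cyc_pi (μ : Measure (X × Y)) [IsProbabilityMeasure μ] (hn : 2 ≤ n) (j : Fin n) :
    (Measure.pi fun _ : Fin n ↦ μ).map (fun ω ↦ cyc ω j)
      = (μ.map Prod.fst).prod (μ.map Prod.snd) := by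
  have hindep : IndepFun (fun ω : Fin n → X × Y ↦ ω j) (fun ω ↦ ω (cycIdx j))
      (Measure.pi fun _ ↦ μ) :=
    (iIndepFun_pi (X := fun _ ↦ id) fun _ ↦ aemeasurable_id).indepFun (cycIdx_ne_self hn j).symm
  have hpair := (indepFun_iff_map_prod_eq_prod_map_map (measurable_pi_apply j).aemeasurable
    (measurable_pi_apply (cycIdx j)).aemeasurable).1 hindep
  simp only [(measurePreserving_eval (fun _ ↦ μ) _).map_eq] at hpair
  rw [Measure.map_prod_map _ _ measurable_fst measurable_snd, ← hpair,
    Measure.map_map (by fun_prop) (by fun_prop)]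
  rfl

end CyclicSample

section DegenerateKernel

variable {X Y : Type*} [MeasurableSpace X] [MeasurableSpace Y] {n : ℕ}

/-- The coordinates of the sample on which `cyc Z j` depends. -/
def cycPair (j : Fin n) : Finset (Fin n) := {j, cycIdx j}

structure IsDegenerateKernel (μ : Measure (X × Y)) (K : X × Y → X × Y → ℝ) : Prop where
  measurable : Measurable (Function.uncurry K)
  integral_fst : ∀ w, ∫ z, K z w ∂μ = 0
  integral_snd : ∀ z, ∫ w, K z w ∂((μ.map Prod.fst).prod (μ.map Prod.snd)) = 0

variable {μ : Measure (X × Y)} {K : X × Y → X × Y → ℝ} {c : ℝ}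

theorem IsDegenerateKernel.integrable_mul {Ω : Type*} [MeasurableSpace Ω] {P : Measure Ω}
    [IsFiniteMeasure P] (hK : IsDegenerateKernel μ K) (hc : ∀ z w, |K z w| ≤ c)
    {a b a' b' : Ω → X × Y} (ha : Measurable a) (hb : Measurable b) (ha' : Measurable a')
    (hb' : Measurable b') : Integrable (fun x ↦ K (a x) (b x) * K (a' x) (b' x)) P :=
  .of_bound ((hK.measurable.comp (ha.prodMk hb)).mul
      (hK.measurable.comp (ha'.prodMk hb'))).aestronglyMeasurable (c ^ 2)
    (ae_of_all _ fun _ ↦ abs_mul_le_sq_of_abs_le hc _ _ _ _)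

variable [IsProbabilityMeasure μ]

theorem IsDegenerateKernel.integral_mul_eq_zero_of_notMem (hK : IsDegenerateKernel μ K)
    (hc : ∀ z w, |K z w| ≤ c) {i j k l : Fin n}
    (hi : i ∉ insert k (cycPair j ∪ cycPair l)) :
    ∫ ω, K (ω i) (cyc ω j) * K (ω k) (cyc ω l) ∂(Measure.pi fun _ ↦ μ) = 0 := by
  have hindep := indepFun_pi_of_disjoint μ (disjoint_singleton_left.2 hi)
    (f := fun x ↦ x ⟨i, mem_singleton_self i⟩)
    (g := fun x ↦ (((x ⟨j, by simp [cycPair]⟩).1, (x ⟨cycIdx j, by simp [cycPair]⟩).2),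
      x ⟨k, by simp [cycPair]⟩,
      ((x ⟨l, by simp [cycPair]⟩).1, (x ⟨cycIdx l, by simp [cycPair]⟩).2)))
    (by fun_prop) (by fun_prop)
  refine hindep.integral_comp_eq_zero (Φ := fun z b ↦ K z b.1 * K b.2.1 b.2.2)
    (by fun_prop) (by fun_prop) ?_ fun b ↦ ?_
  · exact hK.integrable_mul hc (by fun_prop) (by fun_prop) (by fun_prop) (by fun_prop)
  · simp only [(measurePreserving_eval (fun _ ↦ μ) i).map_eq]
    rw [integral_mul_const, hK.integral_fst, zero_mul]

theorem IsDegenerateKernel.integral_mul_eq_zero_of_notMem_pair (hK : IsDegenerateKernel μ K)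
    (hc : ∀ z w, |K z w| ≤ c) (hn : 2 ≤ n) {i j k l : Fin n}
    (hj : Disjoint (cycPair j) (insert i (insert k (cycPair l)))) :
    ∫ ω, K (ω i) (cyc ω j) * K (ω k) (cyc ω l) ∂(Measure.pi fun _ ↦ μ) = 0 := by
  have hindep := indepFun_pi_of_disjoint μ hj
    (f := fun x ↦ ((x ⟨j, by simp [cycPair]⟩).1, (x ⟨cycIdx j, by simp [cycPair]⟩).2))
    (g := fun x ↦ (x ⟨i, by simp [cycPair]⟩, x ⟨k, by simp [cycPair]⟩,
      ((x ⟨l, by simp [cycPair]⟩).1, (x ⟨cycIdx l, by simp [cycPair]⟩).2)))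
    (by fun_prop) (by fun_prop)
  refine hindep.integral_comp_eq_zero (Φ := fun w b ↦ K b.1 w * K b.2.1 b.2.2)
    (by fun_prop) (by fun_prop) ?_ fun b ↦ ?_
  · exact hK.integrable_mul hc (by fun_prop) (by fun_prop) (by fun_prop) (by fun_prop)
  · rw [show (fun ω : Fin n → X × Y ↦ ((ω j).1, (ω (cycIdx j)).2)) = fun ω ↦ cyc ω j from rfl,
      map_cyc_pi μ hn, integral_mul_const, hK.integral_snd, zero_mul]

theorem IsDegenerateKernel.integral_mul_eq_zero (hK : IsDegenerateKernel μ K)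
    (hc : ∀ z w, |K z w| ≤ c) (hn : 2 ≤ n) {i j k l : Fin n}
    (h : ¬((i ∈ cycPair j ∪ cycPair l ∧ k ∈ cycPair j ∪ cycPair l)
      ∨ (i = k ∧ ¬Disjoint (cycPair j) (cycPair l)))) :
    ∫ ω, K (ω i) (cyc ω j) * K (ω k) (cyc ω l) ∂(Measure.pi fun _ ↦ μ) = 0 := by
  by_cases hi : i ∉ insert k (cycPair j ∪ cycPair l)
  · exact hK.integral_mul_eq_zero_of_notMem hc hi
  by_cases hk : k ∉ insert i (cycPair l ∪ cycPair j)
  · simp_rw [mul_comm (K _ (cyc _ j))]; exact hK.integral_mul_eq_zero_of_notMem hc hk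
  by_cases hj : Disjoint (cycPair j) (insert i (insert k (cycPair l)))
  · exact hK.integral_mul_eq_zero_of_notMem_pair hc hn hj
  refine absurd ?_ h
  rw [not_not] at hi hk
  by_cases hik : i = k
  · subst hik
    by_cases hiS : i ∈ cycPair j ∪ cycPair l
    · exact Or.inl ⟨hiS, hiS⟩
    rw [mem_union, not_or] at hiS
    simp only [disjoint_insert_right, hiS.1, not_false_eq_true, true_and] at hj
    exact Or.inr ⟨rfl, hj⟩
  · rw [union_comm] at hk
    exact Or.inl ⟨mem_of_mem_insert_of_ne hi hik,
      mem_of_mem_insert_of_ne hk (Ne.symm hik)⟩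

theorem card_filter_not_disjoint_cycPair_le (j : Fin n) :
    #{l | ¬Disjoint (cycPair j) (cycPair l)} ≤ 3 := by
  refine (card_le_card fun l hl ↦ ?_).trans
    (card_le_three (a := j) (b := cycIdx j) (c := (finRotate n).symm j))
  simp only [mem_filter, mem_univ, true_and, cycPair, disjoint_insert_left,
    disjoint_insert_right, disjoint_singleton, mem_insert,
    mem_singleton, not_and_or, not_not, not_or] at hl
  have hpred : j = cycIdx l ↔ l = (finRotate n).symm j := by
    rw [cycIdx_eq_finRotate, Equiv.eq_symm_apply, eq_comm]
  have hinj : cycIdx j = cycIdx l ↔ j = l := cycIdx_injective.eq_iff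
  simp only [mem_insert, mem_singleton]
  grind

theorem card_filter_linked_le :
    #{x : (Fin n × Fin n) × (Fin n × Fin n) |
      (x.1.1 ∈ cycPair x.1.2 ∪ cycPair x.2.2 ∧ x.2.1 ∈ cycPair x.1.2 ∪ cycPair x.2.2)
        ∨ (x.1.1 = x.2.1 ∧ ¬Disjoint (cycPair x.1.2) (cycPair x.2.2))} ≤ 19 * n ^ 2 := by
  set A := univ.biUnion fun jl : Fin n × Fin n ↦
    ((cycPair jl.1 ∪ cycPair jl.2) ×ˢ (cycPair jl.1 ∪ cycPair jl.2)).image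
      fun ik ↦ ((ik.1, jl.1), (ik.2, jl.2))
  set B := univ.biUnion fun ij : Fin n × Fin n ↦
    ({l | ¬Disjoint (cycPair ij.2) (cycPair l)} : Finset (Fin n)).image fun l ↦ (ij, (ij.1, l))
  have hA : #A ≤ 16 * n ^ 2 := by
    refine card_biUnion_le.trans ?_
    calc ∑ jl : Fin n × Fin n, #(_ : Finset _) ≤ ∑ _jl : Fin n × Fin n, 16 := by
          refine sum_le_sum fun jl _ ↦ card_image_le.trans ?_
          have := (card_union_le (cycPair jl.1) (cycPair jl.2)).trans
            (add_le_add (card_le_two (a := jl.1)) (card_le_two (a := jl.2)))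
          rw [card_product]
          nlinarith
      _ = 16 * n ^ 2 := by simp; ring
  have hB : #B ≤ 3 * n ^ 2 := by
    refine card_biUnion_le.trans ?_
    calc ∑ ij : Fin n × Fin n, #(_ : Finset _) ≤ ∑ _ij : Fin n × Fin n, 3 :=
          sum_le_sum fun ij _ ↦ card_image_le.trans (card_filter_not_disjoint_cycPair_le ij.2)
      _ = 3 * n ^ 2 := by simp; ring
  refine (card_le_card fun x hx ↦ ?_).trans ((card_union_le A B).trans (by omega))
  obtain ⟨⟨i, j⟩, ⟨k, l⟩⟩ := x
  simp only [mem_filter, mem_univ, true_and] at hx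
  rcases hx with ⟨hi, hk⟩ | ⟨rfl, hjl⟩
  · exact mem_union_left _ (mem_biUnion.2 ⟨(j, l), mem_univ _,
      mem_image.2 ⟨(i, k), mem_product.2 ⟨hi, hk⟩, rfl⟩⟩)
  · exact mem_union_right _ (mem_biUnion.2 ⟨(i, j), mem_univ _,
      mem_image.2 ⟨l, by simpa using hjl, rfl⟩⟩)

theorem IsDegenerateKernel.sum_integral_mul_le (hK : IsDegenerateKernel μ K)
    (hc : ∀ z w, |K z w| ≤ c) (hn : 2 ≤ n) :
    ∑ p : Fin n × Fin n, ∑ q : Fin n × Fin n,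
      ∫ ω, K (ω p.1) (cyc ω p.2) * K (ω q.1) (cyc ω q.2) ∂(Measure.pi fun _ ↦ μ)
      ≤ 19 * c ^ 2 * n ^ 2 := by
  set T : (Fin n × Fin n) × (Fin n × Fin n) → ℝ := fun x ↦
    ∫ ω, K (ω x.1.1) (cyc ω x.1.2) * K (ω x.2.1) (cyc ω x.2.2) ∂(Measure.pi fun _ ↦ μ)
  have hT (x) : T x ≤ c ^ 2 := by
    have := norm_integral_le_of_norm_le_const (μ := Measure.pi fun _ ↦ μ) (C := c ^ 2)
      (f := fun ω ↦ K (ω x.1.1) (cyc ω x.1.2) * K (ω x.2.1) (cyc ω x.2.2))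
      (ae_of_all _ fun ω ↦ abs_mul_le_sq_of_abs_le hc _ _ _ _)
    simpa using (le_abs_self _).trans this
  have hsupp : ({x | T x ≠ 0} : Finset _) ⊆ ({x : (Fin n × Fin n) × (Fin n × Fin n) |
      (x.1.1 ∈ cycPair x.1.2 ∪ cycPair x.2.2 ∧ x.2.1 ∈ cycPair x.1.2 ∪ cycPair x.2.2)
        ∨ (x.1.1 = x.2.1 ∧ ¬Disjoint (cycPair x.1.2) (cycPair x.2.2))} : Finset _) := by
    intro x hx
    simp only [mem_filter, mem_univ, true_and] at hx ⊢
    exact not_not.1 (mt (hK.integral_mul_eq_zero hc hn) hx)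
  calc ∑ p : Fin n × Fin n, ∑ q : Fin n × Fin n, T (p, q) = ∑ x, T x :=
        (Fintype.sum_prod_type' fun p q ↦ T (p, q)).symm
    _ = ∑ x with T x ≠ 0, T x := (sum_filter_ne_zero _).symm
    _ ≤ #{x | T x ≠ 0} • c ^ 2 := sum_le_card_nsmul _ _ _ fun x _ ↦ hT x
    _ ≤ (19 * n ^ 2) • c ^ 2 :=
        nsmul_le_nsmul_left (sq_nonneg c) ((card_le_card hsupp).trans card_filter_linked_le)
    _ = 19 * c ^ 2 * n ^ 2 := by push_cast [nsmul_eq_mul]; ring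

theorem IsDegenerateKernel.integral_sq_sum_le (hK : IsDegenerateKernel μ K)
    (hc : ∀ z w, |K z w| ≤ c) (hn : 2 ≤ n) :
    ∫ ω : Fin n → X × Y, (∑ i, ∑ j, K (ω i) (cyc ω j)) ^ 2 ∂(Measure.pi fun _ ↦ μ)
      ≤ 19 * c ^ 2 * n ^ 2 := by
  have hexpand (ω : Fin n → X × Y) : (∑ i, ∑ j, K (ω i) (cyc ω j)) ^ 2
      = ∑ p : Fin n × Fin n, ∑ q : Fin n × Fin n,
          K (ω p.1) (cyc ω p.2) * K (ω q.1) (cyc ω q.2) := by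
    rw [← Fintype.sum_prod_type', sq, sum_mul_sum]
  have hint (p q : Fin n × Fin n) : Integrable (fun ω : Fin n → X × Y ↦
      K (ω p.1) (cyc ω p.2) * K (ω q.1) (cyc ω q.2)) (Measure.pi fun _ ↦ μ) :=
    hK.integrable_mul hc (measurable_pi_apply _) (measurable_cyc _) (measurable_pi_apply _)
      (measurable_cyc _)
  simp_rw [hexpand]
  rw [integral_finsetSum _ fun p _ ↦ integrable_finsetSum _ fun q _ ↦ hint p q]
  simp_rw [integral_finsetSum _ fun q _ ↦ hint _ q]
  exact hK.sum_integral_mul_le hc hn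

end DegenerateKernel

noncomputable def rankKernel {X Y : Type*} [MeasurableSpace X] [MeasurableSpace Y]
    (μ ν : Measure (X × Y)) (θ : X × Y → ℝ) (μs : ℝ) (z w : X × Y) : ℝ :=
  (if θ z < θ w then 1 else 0) - (1 - cdfOf ν θ (θ z)) - cdfOf μ θ (θ w) + μs

section RankKernel

variable {X Y : Type*} [MeasurableSpace X] [MeasurableSpace Y] {n : ℕ}
  {μ ν : Measure (X × Y)} {θ : X × Y → ℝ} {μs : ℝ}

theorem cdfOf_nonneg (t : ℝ) : 0 ≤ cdfOf μ θ t := ENNReal.toReal_nonneg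

theorem cdfOf_le_one [IsProbabilityMeasure μ] (t : ℝ) : cdfOf μ θ t ≤ 1 := measureReal_le_one

theorem measurable_cdfOf [IsFiniteMeasure μ] : Measurable (cdfOf μ θ) :=
  Monotone.measurable fun _ _ hst ↦
    measureReal_mono fun _ hz ↦ le_trans hz hst

theorem integral_ite_lt_left [IsProbabilityMeasure μ] (hθ : Measurable θ)
    (hatom : ∀ t, μ {z | θ z = t} = 0) (t : ℝ) :
    ∫ z, (if θ z < t then 1 else 0 : ℝ) ∂μ = cdfOf μ θ t := by
  have hle : {z | θ z ≤ t} = {z | θ z < t} ∪ {z | θ z = t} := by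
    ext; simp [le_iff_lt_or_eq]
  have hdisj : Disjoint {z | θ z < t} {z | θ z = t} :=
    Set.disjoint_left.2 fun _ h ↦ ne_of_lt h
  rw [cdfOf, ← measureReal_def, hle, measureReal_union hdisj
    (measurableSet_eq_fun hθ measurable_const), measureReal_def μ {z | θ z = t}, hatom,
    ENNReal.toReal_zero, add_zero, ← integral_indicator_one (measurableSet_lt hθ measurable_const)]
  rfl

theorem integral_ite_lt_right [IsProbabilityMeasure ν] (hθ : Measurable θ) (t : ℝ) :
    ∫ w, (if t < θ w then 1 else 0 : ℝ) ∂ν = 1 - cdfOf ν θ t := by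
  have hgt : {w | t < θ w} = {w | θ w ≤ t}ᶜ := by ext; simp
  rw [cdfOf, ← measureReal_def, ← probReal_compl_eq_one_sub (measurableSet_le hθ measurable_const),
    ← hgt, ← integral_indicator_one (measurableSet_lt measurable_const hθ)]
  rfl

theorem measureReal_prod_lt_eq_integral_left [IsProbabilityMeasure μ] [IsProbabilityMeasure ν]
    (hθ : Measurable θ) :
    (μ.prod ν).real {p | θ p.1 < θ p.2} = ∫ z, (1 - cdfOf ν θ (θ z)) ∂μ := by
  have hS : MeasurableSet {p : (X × Y) × (X × Y) | θ p.1 < θ p.2} :=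
    measurableSet_lt (hθ.comp measurable_fst) (hθ.comp measurable_snd)
  rw [← integral_indicator_one hS, integral_prod _ ((integrable_const 1).indicator hS)]
  exact integral_congr_ae (ae_of_all _ fun z ↦ integral_ite_lt_right hθ (θ z))

theorem measureReal_prod_lt_eq_integral_right [IsProbabilityMeasure μ] [IsProbabilityMeasure ν]
    (hθ : Measurable θ) (hatom : ∀ t, μ {z | θ z = t} = 0) :
    (μ.prod ν).real {p | θ p.1 < θ p.2} = ∫ w, cdfOf μ θ (θ w) ∂ν := by
  have hS : MeasurableSet {p : (X × Y) × (X × Y) | θ p.1 < θ p.2} :=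
    measurableSet_lt (hθ.comp measurable_fst) (hθ.comp measurable_snd)
  rw [← integral_indicator_one hS, integral_prod_symm _ ((integrable_const 1).indicator hS)]
  exact integral_congr_ae (ae_of_all _ fun w ↦ integral_ite_lt_left hθ hatom (θ w))

theorem measurable_rankKernel [IsFiniteMeasure μ] [IsFiniteMeasure ν] (hθ : Measurable θ) :
    Measurable (Function.uncurry (rankKernel μ ν θ μs)) := by
  have hlt : MeasurableSet {p : (X × Y) × (X × Y) | θ p.1 < θ p.2} :=
    measurableSet_lt (hθ.comp measurable_fst) (hθ.comp measurable_snd)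
  have := measurable_cdfOf (μ := μ) (θ := θ)
  have := measurable_cdfOf (μ := ν) (θ := θ)
  unfold rankKernel Function.uncurry
  exact (((Measurable.ite hlt measurable_const measurable_const).sub (by fun_prop)).sub
    (by fun_prop)).add_const _

theorem abs_rankKernel_le [IsProbabilityMeasure μ] [IsProbabilityMeasure ν] (h0 : 0 ≤ μs)
    (h1 : μs ≤ 1) (z w : X × Y) : |rankKernel μ ν θ μs z w| ≤ 2 := by
  have := cdfOf_nonneg (μ := μ) (θ := θ) (θ w)
  have := cdfOf_le_one (μ := μ) (θ := θ) (θ w)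
  have := cdfOf_nonneg (μ := ν) (θ := θ) (θ z)
  have := cdfOf_le_one (μ := ν) (θ := θ) (θ z)
  rw [rankKernel, abs_le]
  constructor <;> split_ifs <;> linarith

theorem integrable_ite_lt {α : Type*} [MeasurableSpace α] {m : Measure α} [IsFiniteMeasure m]
    {f g : α → ℝ} (hf : Measurable f) (hg : Measurable g) :
    Integrable (fun z ↦ if f z < g z then 1 else 0 : α → ℝ) m :=
  (integrable_const 1).indicator (measurableSet_lt hf hg)

theorem integrable_cdfOf_comp {m : Measure (X × Y)} [IsFiniteMeasure m] [IsProbabilityMeasure μ]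
    (hθ : Measurable θ) : Integrable (fun z ↦ cdfOf μ θ (θ z)) m :=
  .of_bound (measurable_cdfOf.comp hθ).aestronglyMeasurable 1 (ae_of_all _ fun z ↦ by
    rw [Real.norm_eq_abs, abs_of_nonneg (cdfOf_nonneg _)]; exact cdfOf_le_one _)

theorem integral_rankKernel_left [IsProbabilityMeasure μ] [IsProbabilityMeasure ν]
    (hθ : Measurable θ) (hatom : ∀ t, μ {z | θ z = t} = 0)
    (hμs : μs = (μ.prod ν).real {p | θ p.1 < θ p.2}) (w : X × Y) :
    ∫ z, rankKernel μ ν θ μs z w ∂μ = 0 := by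
  have h₁ := integrable_ite_lt (m := μ) hθ (measurable_const (a := θ w))
  have h₂ : Integrable (fun z ↦ 1 - cdfOf ν θ (θ z)) μ :=
    (integrable_const 1).sub (integrable_cdfOf_comp hθ)
  have h₃ : Integrable (fun z ↦ (if θ z < θ w then 1 else 0) - (1 - cdfOf ν θ (θ z))) μ :=
    h₁.sub h₂
  have h₄ : Integrable (fun z ↦
      (if θ z < θ w then 1 else 0) - (1 - cdfOf ν θ (θ z)) - cdfOf μ θ (θ w)) μ :=
    h₃.sub (integrable_const _)
  simp only [rankKernel]
  rw [integral_add h₄ (integrable_const _), integral_sub h₃ (integrable_const _),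
    integral_sub h₁ h₂,
    integral_ite_lt_left hθ hatom, ← measureReal_prod_lt_eq_integral_left hθ, ← hμs]
  simp

theorem integral_rankKernel_right [IsProbabilityMeasure μ] [IsProbabilityMeasure ν]
    (hθ : Measurable θ) (hatom : ∀ t, μ {z | θ z = t} = 0)
    (hμs : μs = (μ.prod ν).real {p | θ p.1 < θ p.2}) (z : X × Y) :
    ∫ w, rankKernel μ ν θ μs z w ∂ν = 0 := by
  have h₁ := integrable_ite_lt (m := ν) (measurable_const (a := θ z)) hθ
  have h₂ := integrable_cdfOf_comp (m := ν) (μ := μ) hθ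
  have h₃ : Integrable (fun w ↦ (if θ z < θ w then 1 else 0) - (1 - cdfOf ν θ (θ z))) ν :=
    h₁.sub (integrable_const _)
  have h₄ : Integrable (fun w ↦
      (if θ z < θ w then 1 else 0) - (1 - cdfOf ν θ (θ z)) - cdfOf μ θ (θ w)) ν :=
    h₃.sub h₂
  simp only [rankKernel]
  rw [integral_add h₄ (integrable_const _), integral_sub h₃ h₂,
    integral_sub h₁ (integrable_const _),
    integral_ite_lt_right hθ, ← measureReal_prod_lt_eq_integral_right hθ hatom, ← hμs]
  simp

theorem Rstat_sub_sub_Rproj_eq (hn : n ≠ 0) (ω : Fin n → X × Y) :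
    Rstat θ ω - μs - Rproj θ (cdfOf μ θ) (cdfOf ν θ) μs ω
      = ((n : ℝ) ^ 2)⁻¹ * ∑ i, ∑ j, rankKernel μ ν θ μs (ω i) (cyc ω j) := by
  simp only [Rstat, Rproj, rankKernel, sum_add_distrib, sum_sub_distrib,
    sum_const, card_univ, Fintype.card_fin, nsmul_eq_mul]
  field_simp
  simp only [← mul_sum]
  ring

end RankKernel

/-- There is a universal constant `C` such that for any i.i.d. sample of size
`n ≥ 3` from a joint distribution `μ`, with cyclic permutation, and any fixed measurable
`θ̂` atomless under both the joint measure and the product measure,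
`E[(R − μ* − R_μ)²] ≤ C·n⁻²`. -/
theorem stmt_5 :
    ∃ C : ℝ, 0 < C ∧
      ∀ (X Y : Type*) [MeasurableSpace X] [MeasurableSpace Y]
        (μ : Measure (X × Y)) [IsProbabilityMeasure μ]
        (ν : Measure (X × Y)), ν = (μ.map Prod.fst).prod (μ.map Prod.snd) →
        ∀ (θ : X × Y → ℝ), Measurable θ →
          (∀ t : ℝ, μ {z | θ z = t} = 0) →
          (∀ t : ℝ, ν {z | θ z = t} = 0) →
          ∀ n : ℕ, 3 ≤ n →
          ∀ μs : ℝ, μs = ((μ.prod ν) {p : (X × Y) × (X × Y) | θ p.1 < θ p.2}).toReal →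
          (∫ ω, (Rstat θ ω - μs - Rproj θ (cdfOf μ θ) (cdfOf ν θ) μs ω) ^ 2
              ∂(Measure.pi fun _ : Fin n => μ))
            ≤ C / (n : ℝ) ^ 2 := by
  refine ⟨76, by norm_num, ?_⟩
  rintro X Y _ _ μ _ ν rfl θ hθ hatom - n hn μs hμs
  have := Measure.isProbabilityMeasure_map (μ := μ) measurable_fst.aemeasurable
  have := Measure.isProbabilityMeasure_map (μ := μ) measurable_snd.aemeasurable
  set ν := (μ.map Prod.fst).prod (μ.map Prod.snd)
  have hK : IsDegenerateKernel μ (rankKernel μ ν θ μs) :=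
    ⟨measurable_rankKernel hθ, integral_rankKernel_left hθ hatom hμs,
      integral_rankKernel_right hθ hatom hμs⟩
  have hc := abs_rankKernel_le (μ := μ) (ν := ν) (θ := θ) (μs := μs)
    (by rw [hμs]; exact measureReal_nonneg) (by rw [hμs]; exact measureReal_le_one)
  simp_rw [Rstat_sub_sub_Rproj_eq (by omega : n ≠ 0), mul_pow]
  rw [integral_const_mul]
  calc ((n : ℝ) ^ 2)⁻¹ ^ 2 * ∫ ω : Fin n → X × Y, (∑ i, ∑ j, _) ^ 2 ∂(Measure.pi fun _ ↦ μ)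
      ≤ ((n : ℝ) ^ 2)⁻¹ ^ 2 * (19 * 2 ^ 2 * n ^ 2) := by
        gcongr; exact hK.integral_sq_sum_le hc (by omega)
    _ = 76 / (n : ℝ) ^ 2 := by field_simp; norm_num
end

section
/- Let P_{XY} ≪ P_X×P_Y with likelihood ratio L, and suppose L(X',Y') has an atomless distribution for (X',Y') ∼ P_X×P_Y. Let (X,Y) ∼ P_{XY}, and (X',Y'), (X'',Y'') i.i.d. ∼ P_X×P_Y, the three pairs mutually independent. Then P( L(X,Y) < L(X',Y') ) = 1/2 − (1/4)·E| L(X',Y') − L(X'',Y'') |. Equivalently, with θ = L/(1+L), μ := P(θ(X,Y) < θ(X',Y')) = 1/2 − (1/4)·E|L(X',Y') − L(X'',Y'')|. -/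
open MeasureTheory ProbabilityTheory

lemma aux_prod_withDensity {α : Type*} [MeasurableSpace α] (ν : Measure α) [SFinite ν]
    (g : α → ENNReal) (hg : Measurable g) :
    (ν.withDensity g).prod ν = (ν.prod ν).withDensity (fun q => g q.1) := by
  ext s hs
  rw [withDensity_apply _ hs, Measure.prod_apply hs,
    lintegral_withDensity_eq_lintegral_mul _ hg (measurable_measure_prodMk_left hs)]
  have hm : AEMeasurable (s.indicator (fun q : α × α => g q.1)) (ν.prod ν) :=
    ((hg.comp measurable_fst).indicator hs).aemeasurable
  rw [← lintegral_indicator hs, MeasureTheory.lintegral_prod _ hm]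
  congr 1
  ext z
  have : ∀ w : α, s.indicator (fun q => g q.1) (z, w)
      = g z * (Prod.mk z ⁻¹' s).indicator (fun _ => (1 : ENNReal)) w := by
    intro w
    by_cases hw : (z, w) ∈ s <;> simp [Set.indicator, hw, Set.mem_preimage]
  simp_rw [this]
  rw [lintegral_const_mul _ (measurable_const.indicator (measurable_prodMk_left hs))]
  rw [lintegral_indicator (measurable_prodMk_left hs) _]
  simp

set_option maxHeartbeats 1000000 in
/-- For `μ = P_{XY} ≪ ν = P_X × P_Y` with likelihood ratio `L` atomless
under `ν`, `θ = L/(1+L)`, `(X,Y) ∼ μ` independent of `(X',Y'), (X'',Y'')` i.i.d. `ν`: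
`P(L(X,Y) < L(X',Y')) = 1/2 − (1/4)·E|L(X',Y') − L(X'',Y'')|`, and equivalently
`μ₀ := P(θ(X,Y) < θ(X',Y')) = 1/2 − (1/4)·E|L(X',Y') − L(X'',Y'')|`. -/
theorem stmt_18 {X Y : Type*} [MeasurableSpace X] [MeasurableSpace Y]
    (μ : Measure (X × Y)) [IsProbabilityMeasure μ]
    (ν : Measure (X × Y)) (hν : ν = (μ.map Prod.fst).prod (μ.map Prod.snd))
    (hac : μ ≪ ν)
    (L : X × Y → ℝ) (hL : L = fun z => (μ.rnDeriv ν z).toReal)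
    (θ : X × Y → ℝ) (hθ : θ = fun z => L z / (1 + L z))
    (hcont : ∀ t : ℝ, ν {z | L z = t} = 0) :
    ((μ.prod ν) {p : (X × Y) × (X × Y) | L p.1 < L p.2}).toReal
        = 1 / 2 - (1 / 4) * (∫ q, |L q.1 - L q.2| ∂(ν.prod ν))
      ∧ ((μ.prod ν) {p : (X × Y) × (X × Y) | θ p.1 < θ p.2}).toReal
        = 1 / 2 - (1 / 4) * ∫ q, |L q.1 - L q.2| ∂(ν.prod ν) := by
  -- ν is a probability measure
  haveI h1 : IsProbabilityMeasure (μ.map Prod.fst) :=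
    Measure.isProbabilityMeasure_map measurable_fst.aemeasurable
  haveI h2 : IsProbabilityMeasure (μ.map Prod.snd) :=
    Measure.isProbabilityMeasure_map measurable_snd.aemeasurable
  haveI hνP : IsProbabilityMeasure ν := by rw [hν]; infer_instance
  -- basic facts about L
  have hLmeas : Measurable L := by rw [hL]; exact (Measure.measurable_rnDeriv μ ν).ennreal_toReal
  have hL0 : ∀ z, 0 ≤ L z := by rw [hL]; intro z; exact ENNReal.toReal_nonneg
  have hae : (fun z => ENNReal.ofReal (L z)) =ᵐ[ν] μ.rnDeriv ν := by
    filter_upwards [Measure.rnDeriv_lt_top μ ν] with z hz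
    rw [hL]; exact ENNReal.ofReal_toReal hz.ne
  have hInt : Integrable L ν := by rw [hL]; exact Measure.integrable_toReal_rnDeriv
  have hmean : ∫ z, L z ∂ν = 1 := by
    rw [hL, Measure.integral_toReal_rnDeriv hac]; simp
  set ρ : Measure ((X × Y) × (X × Y)) := ν.prod ν with hρ
  set A : Set ((X × Y) × (X × Y)) := {p | L p.1 < L p.2} with hA
  set B : Set ((X × Y) × (X × Y)) := {p | L p.2 < L p.1} with hB
  have hAm : MeasurableSet A := measurableSet_lt (hLmeas.comp measurable_fst)
    (hLmeas.comp measurable_snd)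
  have hBm : MeasurableSet B := measurableSet_lt (hLmeas.comp measurable_snd)
    (hLmeas.comp measurable_fst)
  -- integrability on the product
  have hmp_fst : MeasurePreserving Prod.fst ρ ν := ⟨measurable_fst, Measure.fst_prod⟩
  have hmp_snd : MeasurePreserving Prod.snd ρ ν := ⟨measurable_snd, Measure.snd_prod⟩
  have hI1 : Integrable (fun q => L q.1) ρ := (hmp_fst.integrable_comp hLmeas.aestronglyMeasurable).2 hInt
  have hI2 : Integrable (fun q => L q.2) ρ := (hmp_snd.integrable_comp hLmeas.aestronglyMeasurable).2 hInt
  have hint1 : ∫ q, L q.1 ∂ρ = 1 := by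
    rw [← hmean, ← hmp_fst.map_eq,
      integral_map measurable_fst.aemeasurable hLmeas.aestronglyMeasurable]
  have hint2 : ∫ q, L q.2 ∂ρ = 1 := by
    rw [← hmean, ← hmp_snd.map_eq,
      integral_map measurable_snd.aemeasurable hLmeas.aestronglyMeasurable]
  -- the diagonal is null
  have hdiag : ρ {p : (X × Y) × (X × Y) | L p.1 = L p.2} = 0 := by
    have hDm : MeasurableSet {p : (X × Y) × (X × Y) | L p.1 = L p.2} :=
      measurableSet_eq_fun (hLmeas.comp measurable_fst) (hLmeas.comp measurable_snd)
    rw [hρ, Measure.prod_apply hDm]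
    have hz : ∀ z, ν (Prod.mk z ⁻¹' {p : (X × Y) × (X × Y) | L p.1 = L p.2}) = 0 := by
      intro z
      have he : Prod.mk z ⁻¹' {p : (X × Y) × (X × Y) | L p.1 = L p.2} = {w | L w = L z} := by
        ext w; simp [eq_comm]
      rw [he]; exact hcont (L z)
    rw [lintegral_congr fun z => hz z]
    simp
  -- swap symmetry
  have hswap : MeasurePreserving Prod.swap ρ ρ := Measure.measurePreserving_swap
  have ha_swap : ∫ q, A.indicator (fun q => L q.1) q ∂ρ
      = ∫ q, B.indicator (fun q => L q.2) q ∂ρ := by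
    have hco := hswap.integral_comp MeasurableEquiv.prodComm.measurableEmbedding
      (A.indicator (fun q => L q.1))
    rw [← hco]
    refine integral_congr_ae (Filter.EventuallyEq.of_eq (funext fun p => ?_))
    by_cases hp : L p.2 < L p.1
    · simp [Set.indicator, hA, hB, MeasurableEquiv.prodComm, hp]
    · simp [Set.indicator, hA, hB, MeasurableEquiv.prodComm, hp]
  set a : ℝ := ∫ q, A.indicator (fun q => L q.1) q ∂ρ with ha
  have hIA : Integrable (A.indicator (fun q => L q.1)) ρ := hI1.indicator hAm
  have hIB : Integrable (B.indicator (fun q => L q.2)) ρ := hI2.indicator hBm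
  -- min = sum of indicators a.e.
  have hmin_ae : (fun q => min (L q.1) (L q.2))
      =ᵐ[ρ] fun q => A.indicator (fun q => L q.1) q + B.indicator (fun q => L q.2) q := by
    have : ∀ᵐ q ∂ρ, q ∉ {p : (X × Y) × (X × Y) | L p.1 = L p.2} :=
      (ae_iff).2 (by simpa using hdiag)
    filter_upwards [this] with q hq
    have hne : L q.1 ≠ L q.2 := hq
    rcases lt_or_gt_of_ne hne with h | h
    · have h1 : q ∈ A := h
      have h2 : q ∉ B := by simp [hB]; linarith
      simp [Set.indicator_of_mem h1, Set.indicator_of_notMem h2, min_eq_left h.le]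
    · have h1 : q ∉ A := by simp [hA]; linarith
      have h2 : q ∈ B := h
      simp [Set.indicator_of_notMem h1, Set.indicator_of_mem h2, min_eq_right h.le]
  have hImin : Integrable (fun q => min (L q.1) (L q.2)) ρ :=
    (hIA.add hIB).congr hmin_ae.symm
  have hmin_int : ∫ q, min (L q.1) (L q.2) ∂ρ = 2 * a := by
    rw [integral_congr_ae hmin_ae, integral_add hIA hIB, ← ha_swap, ← ha]; ring
  -- |L1 - L2| = L1 + L2 - 2 min
  have habs : ∫ q, |L q.1 - L q.2| ∂ρ = 2 - 4 * a := by
    have hfun : (fun q : (X × Y) × (X × Y) => |L q.1 - L q.2|)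
        = fun q => L q.1 + L q.2 - 2 * min (L q.1) (L q.2) := by
      funext q
      have h1 := max_add_min (L q.1) (L q.2)
      have h2 := max_sub_min_eq_abs (L q.1) (L q.2)
      have h3 : |L q.1 - L q.2| = |L q.2 - L q.1| := abs_sub_comm _ _
      linarith
    have hIadd : Integrable (fun q : (X × Y) × (X × Y) => L q.1 + L q.2) ρ := hI1.add hI2
    have hI2min : Integrable (fun q : (X × Y) × (X × Y) => 2 * min (L q.1) (L q.2)) ρ :=
      hImin.const_mul 2
    have h2min : ∫ q, 2 * min (L q.1) (L q.2) ∂ρ = 2 * ∫ q, min (L q.1) (L q.2) ∂ρ :=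
      integral_const_mul 2 _
    rw [hfun, integral_sub hIadd hI2min, integral_add hI1 hI2,
      h2min, hmin_int, hint1, hint2]
    ring
  -- the measure equals a
  have hkey : ((μ.prod ν) A).toReal = a := by
    have hmono : (μ.prod ν) A = ∫⁻ q in A, ENNReal.ofReal (L q.1) ∂ρ := by
      conv_lhs => rw [← Measure.withDensity_rnDeriv_eq μ ν hac]
      rw [aux_prod_withDensity ν _ (Measure.measurable_rnDeriv μ ν), withDensity_apply _ hAm]
      refine lintegral_congr_ae (ae_restrict_of_ae ?_)
      have hN : ∀ᵐ q ∂ρ, μ.rnDeriv ν q.1 = ENNReal.ofReal (L q.1) := by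
        apply ae_of_ae_map measurable_fst.aemeasurable
          (p := fun z => μ.rnDeriv ν z = ENNReal.ofReal (L z))
        rw [hmp_fst.map_eq]
        exact hae.symm
      exact hN
    have heq : ∫ q in A, L q.1 ∂ρ = (∫⁻ q in A, ENNReal.ofReal (L q.1) ∂ρ).toReal :=
      integral_eq_lintegral_of_nonneg_ae (ae_restrict_of_ae (ae_of_all _ fun q => hL0 q.1))
        ((hLmeas.comp measurable_fst).aestronglyMeasurable.restrict)
    rw [hmono, ha, integral_indicator hAm, heq]
  have main : ((μ.prod ν) A).toReal = 1 / 2 - (1 / 4) * ∫ q, |L q.1 - L q.2| ∂ρ := by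
    rw [hkey, habs]; ring
  refine ⟨main, ?_⟩
  have hset : {p : (X × Y) × (X × Y) | θ p.1 < θ p.2} = A := by
    ext p
    simp only [hA, Set.mem_setOf_eq, hθ]
    have h1 := hL0 p.1
    have h2 := hL0 p.2
    rw [div_lt_div_iff₀ (by linarith) (by linarith)]
    constructor <;> intro h <;> nlinarith
  rw [hset]
  exact main
end
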